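/- For the cyclic vector field F with F_1 = (x_1^β+x_2^β)/(2S) − x_1, F_2 = (x_2^β+x_3^β)/(2S) − x_2, F_3 = (x_3^β+x_1^β)/(2S) − x_3 where S = x_1^β+x_2^β+x_3^β, the only zero of F in the 2-simplex is (1/3, 1/3, 1/3). -/

import Mathlib

/-!
At a zero, `x₁ ^ β + x₂ ^ β = 2 S x₁` and its two cyclic shifts hold. Subtracting consecutive
equations gives `x₁ ^ β - x₃ ^ β = 2 S (x₁ - x₂)` and its shifts; since `t ↦ t ^ β` is strictly
increasing, `x₁ - x₂` has the sign of `x₁ - x₃`. Going once around the cycle,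
`sign (x₁ - x₂) = -sign (x₃ - x₁) = … = -sign (x₁ - x₂)`, so all coordinates agree.
-/

noncomputable def cycF (β : ℝ) (i : Fin 3) (x₁ x₂ x₃ : ℝ) : ℝ :=
  let S := x₁ ^ β + x₂ ^ β + x₃ ^ β
  match i with
  | 0 => (x₁ ^ β + x₂ ^ β) / (2 * S) - x₁
  | 1 => (x₂ ^ β + x₃ ^ β) / (2 * S) - x₂
  | 2 => (x₃ ^ β + x₁ ^ β) / (2 * S) - x₃

theorem StrictMonoOn.sign_sub_map {α β : Type*} [AddCommGroup α] [LinearOrder α]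
    [IsOrderedAddMonoid α] [AddCommGroup β] [LinearOrder β] [IsOrderedAddMonoid β]
    {s : Set α} {f : α → β} (hf : StrictMonoOn f s) {a b : α} (ha : a ∈ s) (hb : b ∈ s) :
    SignType.sign (f a - f b) = SignType.sign (a - b) := by
  rcases lt_trichotomy a b with h | rfl | h
  · rw [sign_neg (sub_neg.2 h), sign_neg (sub_neg.2 (hf ha hb h))]
  · simp
  · rw [sign_pos (sub_pos.2 h), sign_pos (sub_pos.2 (hf hb ha h))]

section CyclicDifferences

variable {K : Type*} [Field K] [LinearOrder K] [IsStrictOrderedRing K]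
  {s : Set K} {f : K → K} {k a b c : K}

theorem sign_sub_eq_of_map_sub_eq_mul (hf : StrictMonoOn f s) (hk : 0 < k) (ha : a ∈ s)
    (hc : c ∈ s) (h : f a - f c = k * (a - b)) :
    SignType.sign (a - b) = SignType.sign (a - c) := by
  rw [← hf.sign_sub_map ha hc, h, sign_mul, sign_pos hk, one_mul]

theorem eq_of_map_sub_eq_mul_cyclic (hf : StrictMonoOn f s) (hk : 0 < k) (ha : a ∈ s)
    (hb : b ∈ s) (hc : c ∈ s) (hab : f a - f c = k * (a - b))
    (hbc : f b - f a = k * (b - c)) : a = b ∧ b = c := by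
  have hca : f c - f b = k * (c - a) := by linear_combination -hab - hbc
  have s₁ := sign_sub_eq_of_map_sub_eq_mul hf hk ha hc hab
  have s₂ := sign_sub_eq_of_map_sub_eq_mul hf hk hb ha hbc
  have s₃ := sign_sub_eq_of_map_sub_eq_mul hf hk hc hb hca
  have hsign : -SignType.sign (a - b) = SignType.sign (a - b) :=
    calc -SignType.sign (a - b) = SignType.sign (b - c) := by rw [s₂, ← Left.sign_neg, neg_sub]
      _ = SignType.sign (a - c) := by
        rw [← neg_sub c b, Left.sign_neg, ← s₃, ← Left.sign_neg, neg_sub]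
      _ = SignType.sign (a - b) := s₁.symm
  obtain rfl : a = b := by
    rwa [SignType.neg_eq_self_iff, sign_eq_zero_iff, sub_eq_zero] at hsign
  rw [sub_self, sign_zero, eq_comm, sign_eq_zero_iff, sub_eq_zero] at s₁
  exact ⟨rfl, s₁⟩

end CyclicDifferences

theorem rpow_add_rpow_add_rpow_pos {β x₁ x₂ x₃ : ℝ} (h1 : 0 ≤ x₁) (h2 : 0 ≤ x₂) (h3 : 0 ≤ x₃)
    (hsum : x₁ + x₂ + x₃ = 1) : 0 < x₁ ^ β + x₂ ^ β + x₃ ^ β := by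
  obtain hx | hx | hx : 0 < x₁ ∨ 0 < x₂ ∨ 0 < x₃ := by
    by_contra! h
    linarith
  all_goals positivity

theorem cycF_eq_zero_iff {β x₁ x₂ x₃ : ℝ} (hS : x₁ ^ β + x₂ ^ β + x₃ ^ β ≠ 0) :
    (∀ i, cycF β i x₁ x₂ x₃ = 0) ↔
      x₁ ^ β + x₂ ^ β = 2 * (x₁ ^ β + x₂ ^ β + x₃ ^ β) * x₁ ∧
      x₂ ^ β + x₃ ^ β = 2 * (x₁ ^ β + x₂ ^ β + x₃ ^ β) * x₂ ∧
      x₃ ^ β + x₁ ^ β = 2 * (x₁ ^ β + x₂ ^ β + x₃ ^ β) * x₃ := by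
  have h2S : 2 * (x₁ ^ β + x₂ ^ β + x₃ ^ β) ≠ 0 := mul_ne_zero two_ne_zero hS
  simp only [Fin.forall_fin_succ, IsEmpty.forall_iff, and_true]
  simp only [cycF, Fin.succ_zero_eq_one, Fin.succ_one_eq_two, sub_eq_zero, div_eq_iff h2S,
    mul_comm x₁, mul_comm x₂, mul_comm x₃]

theorem cyclic_unique_zero (β : ℝ) (hβ : 0 < β)
    (x₁ x₂ x₃ : ℝ) (h1 : 0 ≤ x₁) (h2 : 0 ≤ x₂) (h3 : 0 ≤ x₃)
    (hsum : x₁ + x₂ + x₃ = 1) :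
    (∀ i : Fin 3, cycF β i x₁ x₂ x₃ = 0) ↔ (x₁ = 1/3 ∧ x₂ = 1/3 ∧ x₃ = 1/3) := by
  have hS := rpow_add_rpow_add_rpow_pos (β := β) h1 h2 h3 hsum
  rw [cycF_eq_zero_iff hS.ne']
  constructor
  · rintro ⟨e₁, e₂, e₃⟩
    obtain ⟨rfl, rfl⟩ := eq_of_map_sub_eq_mul_cyclic
      (Real.strictMonoOn_rpow_Ici_of_exponent_pos hβ) (mul_pos two_pos hS) h1 h2 h3
      (by linear_combination e₁ - e₂) (by linear_combination e₂ - e₃)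
    refine ⟨?_, ?_, ?_⟩ <;> linarith
  · rintro ⟨rfl, rfl, rfl⟩
    refine ⟨?_, ?_, ?_⟩ <;> ring
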